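/- On unlabeled chains, the boolean query expressed by copr2(E) ∘ E ∘ copr1(E) — which is nonempty on a chain C exactly when C has depth exactly 2 — cannot be expressed by any navigational expression built from ∅, id, diversity, the edge label, composition, union, transitive closure, converse, intersection, and projections. Here copr1(R) = {(m,m) | ¬∃n (m,n) ∈ R} and copr2(R) = {(m,m) | ¬∃n (n,m) ∈ R}. -/
import Mathlib


/-- An unlabeled tree. -/
structure DTree (V : Type) where
  E : V → V → Prop
  acyclic : ∀ v, ¬ Relation.TransGen E v v
  root : V
  root_no_in : ∀ m, ¬ E m root
  in_unique : ∀ n, n ≠ root → ∃! m, E m n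

/-- A chain: a tree in which every node has at most one child. -/
structure DChain (V : Type) extends DTree V where
  at_most_one_child : ∀ m n n', E m n → E m n' → n = n'

/-- Navigational expressions over a single edge relation: ∅, id,
diversity, the edge label, composition, union, transitive closure,
converse, intersection, and projections. -/
inductive UExpr : Type
  | empty : UExpr
  | id : UExpr
  | di : UExpr
  | edge : UExpr
  | comp (e₁ e₂ : UExpr) : UExpr
  | union (e₁ e₂ : UExpr) : UExpr
  | tc (e : UExpr) : UExpr
  | conv (e : UExpr) : UExpr
  | inter (e₁ e₂ : UExpr) : UExpr
  | pr1 (e : UExpr) : UExpr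
  | pr2 (e : UExpr) : UExpr

/-- Evaluation of an expression on an unlabeled graph. -/
def UExpr.eval {V : Type} (E : V → V → Prop) : UExpr → V → V → Prop
  | .empty => fun _ _ => False
  | .id => fun m n => m = n
  | .di => fun m n => m ≠ n
  | .edge => E
  | .comp e₁ e₂ => Relation.Comp (e₁.eval E) (e₂.eval E)
  | .union e₁ e₂ => fun m n => e₁.eval E m n ∨ e₂.eval E m n
  | .tc e => Relation.TransGen (e.eval E)
  | .conv e => fun m n => e.eval E n m
  | .inter e₁ e₂ => fun m n => e₁.eval E m n ∧ e₂.eval E m n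
  | .pr1 e => fun m n => m = n ∧ ∃ x, e.eval E m x
  | .pr2 e => fun m n => m = n ∧ ∃ x, e.eval E x m

/-- The evaluation of copr2(E) ∘ E ∘ copr1(E): pairs (m,n) where m has no
incoming edge, (m,n) is an edge, and n has no outgoing edge. -/
def targetRel {V : Type} (E : V → V → Prop) (m n : V) : Prop :=
  (¬ ∃ x, E x m) ∧ E m n ∧ (¬ ∃ y, E n y)

/-- Coprojection-free expressions are preserved by injective homomorphisms. -/
lemma eval_hom {V W : Type} (E : V → V → Prop) (F : W → W → Prop)
    (h : V → W) (hinj : Function.Injective h)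
    (hE : ∀ m n, E m n → F (h m) (h n)) :
    ∀ e : UExpr, ∀ m n, e.eval E m n → e.eval F (h m) (h n) := by
  intro e
  induction e with
  | empty => intro m n hmn; exact hmn.elim
  | id => intro m n hmn; exact congrArg h hmn
  | di => intro m n hmn hc; exact hmn (hinj hc)
  | edge => exact hE
  | comp e1 e2 ih1 ih2 =>
      rintro m n ⟨x, h1, h2⟩
      exact ⟨h x, ih1 _ _ h1, ih2 _ _ h2⟩
  | union e1 e2 ih1 ih2 =>
      rintro m n (h1 | h2)
      · exact Or.inl (ih1 _ _ h1)
      · exact Or.inr (ih2 _ _ h2)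
  | tc e ih =>
      intro m n hmn
      induction hmn with
      | single h1 => exact .single (ih _ _ h1)
      | tail _ h2 ih2 => exact .tail ih2 (ih _ _ h2)
  | conv e ih => intro m n hmn; exact ih n m hmn
  | inter e1 e2 ih1 ih2 => rintro m n ⟨a, b⟩; exact ⟨ih1 _ _ a, ih2 _ _ b⟩
  | pr1 e ih => rintro m n ⟨heq, x, hx⟩; exact ⟨congrArg h heq, h x, ih _ _ hx⟩
  | pr2 e ih => rintro m n ⟨heq, x, hx⟩; exact ⟨congrArg h heq, h x, ih _ _ hx⟩

/-- The successor edge relation on `Fin k`. -/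
def chainE (k : ℕ) (m n : Fin k) : Prop := (n : ℕ) = (m : ℕ) + 1

lemma chainE_lt {k : ℕ} {m n : Fin k} (h : Relation.TransGen (chainE k) m n) :
    (m : ℕ) < (n : ℕ) := by
  induction h with
  | single h1 => simp [chainE] at h1; omega
  | tail _ h2 ih => simp [chainE] at h2; omega

/-- The chain on `Fin (k+1)`. -/
def chainC (k : ℕ) : DChain (Fin (k + 1)) where
  E := chainE (k + 1)
  acyclic := fun v h => absurd (chainE_lt h) (lt_irrefl _)
  root := ⟨0, Nat.succ_pos k⟩
  root_no_in := fun m h => by simp [chainE] at h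
  in_unique := by
    intro n hn
    have h0 : (n : ℕ) ≠ 0 := fun h => hn (Fin.ext h)
    refine ⟨⟨(n : ℕ) - 1, by omega⟩, by simp [chainE]; omega, ?_⟩
    intro m hm
    simp only [chainE] at hm
    apply Fin.ext
    simp
    omega
  at_most_one_child := fun m n n' h h' => Fin.ext (by simp [chainE] at *; omega)

/-- On unlabeled chains, the boolean query copr2(E) ∘ E ∘ copr1(E) is not
boolean-equivalent to any expression of the coprojection-free language. -/
theorem stmt8 (e : UExpr) :
    ¬ ∀ (V : Type), Fintype V → ∀ C : DChain V,
      ((∃ m n : V, e.eval C.E m n) ↔ (∃ m n : V, targetRel C.E m n)) := by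
  intro H
  -- On the 2-node chain, targetRel is nonempty, so e is nonempty.
  have h2 := H (Fin 2) inferInstance (chainC 1)
  have htgt2 : ∃ m n : Fin 2, targetRel (chainC 1).E m n := by
    refine ⟨0, 1, ?_, ?_, ?_⟩
    · rintro ⟨x, hx⟩; simp [chainC, chainE] at hx
    · simp [chainC, chainE]
    · rintro ⟨y, hy⟩; simp [chainC, chainE] at hy; omega
  obtain ⟨m, n, hmn⟩ := h2.mpr htgt2
  -- Embed Fin 2 into Fin 3 by castLE; it's an injective homomorphism.
  have hhom : ∀ a b : Fin 2, (chainC 1).E a b →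
      (chainC 2).E (Fin.castLE (by omega) a) (Fin.castLE (by omega) b) := by
    intro a b hab
    simpa [chainC, chainE] using hab
  have h3 := eval_hom (chainC 1).E (chainC 2).E (Fin.castLE (by omega))
    (Fin.castLE_injective _) hhom e m n hmn
  have h3' := H (Fin 3) inferInstance (chainC 2)
  obtain ⟨a, b, ha, hb, hc⟩ := h3'.mp ⟨_, _, h3⟩
  -- targetRel on the 3-node chain is empty.
  have ha0 : (a : ℕ) = 0 := by
    by_contra hne
    exact ha ⟨⟨(a : ℕ) - 1, by omega⟩, by simp [chainC, chainE]; omega⟩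
  have hb1 : (b : ℕ) = 1 := by
    have := hb; simp [chainC, chainE] at this; omega
  exact hc ⟨⟨2, by omega⟩, by simp [chainC, chainE]; omega⟩
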